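/- For every integer m ≥ 1 and every real σ > 0, G_σ(m)/S(m,σ) ≤ (1/(2m−1)) · e^{−(2m−1)/(2σ²)} ≤ 1/(2m−1). In particular, the constant B_1(m,σ) := 1 + G_σ(m)/S(m,σ) satisfies 1 ≤ B_1(m,σ) ≤ 1 + 1/(2m−1) ≤ 2, uniformly in σ. -/

import Mathlib

/-- Gaussian density with standard deviation `σ`. -/
noncomputable def G (σ z : ℝ) : ℝ :=
  Real.exp (-z ^ 2 / (2 * σ ^ 2)) / (Real.sqrt (2 * Real.pi) * σ)

/-- Normalization constant `S(m,σ) = ∑_{k=1-m}^{m-1} G_σ(k)`. -/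
noncomputable def S (m : ℕ) (σ : ℝ) : ℝ :=
  ∑ k ∈ Finset.Icc (1 - (m : ℤ)) ((m : ℤ) - 1), G σ (k : ℝ)

/-! The sum `S(m,σ)` has `2m - 1` terms, each at least the smallest one `G_σ(m-1)`, while
`G_σ(m) = e^{-(2m-1)/(2σ²)} G_σ(m-1)`; hence `G_σ(m)/S(m,σ) ≤ e^{-(2m-1)/(2σ²)}/(2m-1)`. -/

lemma G_pos {σ : ℝ} (hσ : 0 < σ) (z : ℝ) : 0 < G σ z := by
  unfold G
  positivity

lemma G_le_G_of_sq_le {σ z w : ℝ} (hσ : 0 ≤ σ) (h : z ^ 2 ≤ w ^ 2) : G σ w ≤ G σ z := by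
  unfold G
  gcongr

lemma G_eq_exp_mul_G_sub_one (σ x : ℝ) :
    G σ x = Real.exp (-(2 * x - 1) / (2 * σ ^ 2)) * G σ (x - 1) := by
  unfold G
  rw [← mul_div_assoc, ← Real.exp_add, ← add_div]
  ring_nf

lemma card_Icc_one_sub_sub_one {m : ℕ} (hm : 1 ≤ m) :
    (Finset.Icc (1 - (m : ℤ)) ((m : ℤ) - 1)).card = 2 * m - 1 := by
  rw [Int.card_Icc]
  omega

lemma two_mul_sub_one_mul_G_le_S {m : ℕ} (hm : 1 ≤ m) {σ : ℝ} (hσ : 0 ≤ σ) :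
    (2 * (m : ℝ) - 1) * G σ ((m : ℝ) - 1) ≤ S m σ := by
  have hterm : ∀ k ∈ Finset.Icc (1 - (m : ℤ)) ((m : ℤ) - 1),
      G σ ((m : ℝ) - 1) ≤ G σ (k : ℝ) := by
    intro k hk
    rw [Finset.mem_Icc] at hk
    have hsq : k ^ 2 ≤ ((m : ℤ) - 1) ^ 2 := sq_le_sq' (by linarith) hk.2
    exact G_le_G_of_sq_le hσ (by exact_mod_cast hsq)
  calc (2 * (m : ℝ) - 1) * G σ ((m : ℝ) - 1)
      = (Finset.Icc (1 - (m : ℤ)) ((m : ℤ) - 1)).card • G σ ((m : ℝ) - 1) := by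
        rw [card_Icc_one_sub_sub_one hm, nsmul_eq_mul, Nat.cast_sub (by omega)]
        push_cast
        ring
    _ ≤ S m σ := Finset.card_nsmul_le_sum _ _ _ hterm

lemma G_div_S_le {m : ℕ} (hm : 1 ≤ m) {σ : ℝ} (hσ : 0 < σ) :
    G σ m / S m σ ≤ (1 / (2 * (m : ℝ) - 1)) * Real.exp (-(2 * (m : ℝ) - 1) / (2 * σ ^ 2)) := by
  have h2m : (0 : ℝ) < 2 * m - 1 := by
    have : (1 : ℝ) ≤ m := by exact_mod_cast hm
    linarith
  have hGm1 := G_pos hσ ((m : ℝ) - 1)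
  calc G σ m / S m σ ≤ G σ m / ((2 * (m : ℝ) - 1) * G σ ((m : ℝ) - 1)) :=
        div_le_div_of_nonneg_left (G_pos hσ _).le (by positivity)
          (two_mul_sub_one_mul_G_le_S hm hσ.le)
    _ = (1 / (2 * (m : ℝ) - 1)) * Real.exp (-(2 * (m : ℝ) - 1) / (2 * σ ^ 2)) := by
        rw [G_eq_exp_mul_G_sub_one σ m]
        field_simp

/-- `G_σ(m)/S(m,σ) ≤ (1/(2m-1)) e^{-(2m-1)/(2σ²)} ≤ 1/(2m-1)`, and hence
`B₁(m,σ) = 1 + G_σ(m)/S(m,σ)` satisfies `1 ≤ B₁ ≤ 1 + 1/(2m-1) ≤ 2`, uniformly in `σ`. -/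
theorem B1_bounds (m : ℕ) (hm : 1 ≤ m) (σ : ℝ) (hσ : 0 < σ) :
    G σ m / S m σ ≤ (1 / (2 * (m : ℝ) - 1)) * Real.exp (-(2 * (m : ℝ) - 1) / (2 * σ ^ 2)) ∧
    (1 / (2 * (m : ℝ) - 1)) * Real.exp (-(2 * (m : ℝ) - 1) / (2 * σ ^ 2)) ≤ 1 / (2 * (m : ℝ) - 1) ∧
    1 ≤ 1 + G σ m / S m σ ∧
    1 + G σ m / S m σ ≤ 1 + 1 / (2 * (m : ℝ) - 1) ∧
    1 + 1 / (2 * (m : ℝ) - 1) ≤ 2 := by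
  have hm1 : (1 : ℝ) ≤ m := by exact_mod_cast hm
  have hinv_pos : 0 < 1 / (2 * (m : ℝ) - 1) := by
    apply one_div_pos.mpr
    linarith
  have hinv_le_one : 1 / (2 * (m : ℝ) - 1) ≤ 1 := by
    rw [div_le_one (by linarith)]
    linarith
  have hexp_le_one : Real.exp (-(2 * (m : ℝ) - 1) / (2 * σ ^ 2)) ≤ 1 := by
    rw [Real.exp_le_one_iff]
    apply div_nonpos_of_nonpos_of_nonneg <;> nlinarith
  have hratio := G_div_S_le hm hσ
  have hexp_bound := mul_le_of_le_one_right hinv_pos.le hexp_le_one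
  have hS_pos : 0 < S m σ :=
    lt_of_lt_of_le (mul_pos (by linarith) (G_pos hσ _)) (two_mul_sub_one_mul_G_le_S hm hσ.le)
  have hratio_nonneg : 0 ≤ G σ m / S m σ := div_nonneg (G_pos hσ _).le hS_pos.le
  exact ⟨hratio, hexp_bound, by linarith, by linarith, by linarith⟩
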